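/- Let μ = (1/3)(μ_{(0,0),(0,1)} + μ_{(0,1),(1,0)} + μ_{(1,1),(0,−1)}) be the normalized arc-length measure on the Π-shaped polygonal line consisting of the three segments joining (0,0) to (0,1), (0,1) to (1,1), and (1,1) to (1,0). Then μ is not tight-frame spectral. -/

import Mathlib

/-!
Polarizing the tight-frame identity shows that for `f, g ∈ L²(μ)` with disjoint supports the
frame coefficients satisfy `∑_λ f̂(λ) conj ĝ(λ) = 0`. On the Π-shape, pair a function `k` on the
top side with the ramp `y` on the left side, and `k` reflected to the other end of the top side
with the ramp `y` on the right side. Adding the two relations, the ramps glue to the triangle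
function `1 - |s|` on `[-1, 1]`, whose Fourier transform is `|G(q)|²`, `G(q) = ∫₀¹ e^{-2πiqt} dt`;
this gives `∑_λ k̂(λ₁) |G(λ₂)|² = 0`. For `k = 1_{(0,δ]}` we have `|k̂| ≤ δ` and `k̂/δ → 1` as
`δ → 0`, so dominated convergence yields `∑_λ |G(λ₂)|² = 0`. But the frame identity for the
indicator of the left side says that this sum is `3A > 0`.
-/

open MeasureTheory Metric Set ENNReal

noncomputable section

/-- Euclidean space ℝ^d. -/
abbrev Euc (d : ℕ) := EuclideanSpace ℝ (Fin d)

/-- The exponential `e^{-2πi l·x}`. -/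
noncomputable def fexp {d : ℕ} (l x : Euc d) : ℂ :=
  Complex.exp (-(2 * (Real.pi : ℂ) * Complex.I * ((inner ℝ l x : ℝ) : ℂ)))

/-- `Λ` is a tight-frame spectrum for `μ` with constant `A > 0`:
for every `f ∈ L²(μ)`, `∑_{λ∈Λ} |∫ f(x) e^{-2πi λ·x} dμ(x)|² = A ∫ |f|² dμ`. -/
def IsTightFrameSpectrum {d : ℕ} (μ : Measure (Euc d)) (Λ : Set (Euc d)) (A : ℝ) : Prop :=
  Λ.Countable ∧ 0 < A ∧
    ∀ f : Euc d → ℂ, MemLp f 2 μ →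
      ∑' l : Λ, ‖∫ x, f x * fexp (l : Euc d) x ∂μ‖ ^ 2 = A * ∫ x, ‖f x‖ ^ 2 ∂μ

/-- `μ` is tight-frame spectral: it admits a tight-frame spectrum with some constant `A > 0`. -/
def TightFrameSpectral {d : ℕ} (μ : Measure (Euc d)) : Prop :=
  ∃ Λ A, IsTightFrameSpectrum μ Λ A

/-- The segment measure `μ_{x₀,v}`: pushforward of Lebesgue measure on `[0,1]`
under `t ↦ x₀ + t • v`. -/
noncomputable def segMeasure (x0 v : Euc 2) : Measure (Euc 2) :=
  Measure.map (fun t : ℝ => x0 + t • v) (volume.restrict (Set.Icc (0:ℝ) 1))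

/-- `μ̃`: the pushforward of `μ` under `x ↦ -x`. -/
noncomputable def mneg {d : ℕ} (μ : Measure (Euc d)) : Measure (Euc d) :=
  Measure.map (fun x => -x) μ

/-- The convolution `μ * ν`: pushforward of `μ × ν` under `(x,y) ↦ x + y`. -/
noncomputable def mconv {d : ℕ} (μ ν : Measure (Euc d)) : Measure (Euc d) :=
  Measure.map (fun p : Euc d × Euc d => p.1 + p.2) (μ.prod ν)

/-- The Fourier transform `f̂(ξ) = ∫ f(x) e^{-2πi ξ·x} dx`. -/
noncomputable def ftFun {d : ℕ} (f : Euc d → ℂ) (ξ : Euc d) : ℂ :=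
  ∫ x, f x * fexp ξ x

/-- The point `(a, b)` of ℝ². -/
noncomputable def ptE (a b : ℝ) : Euc 2 := (WithLp.equiv 2 (Fin 2 → ℝ)).symm ![a, b]

open Filter
open scoped Real ComplexConjugate Topology

def negTwoPiI : ℂ := -(2 * π * Complex.I)

def eChar (r : ℝ) : ℂ := Complex.exp (negTwoPiI * r)

lemma negTwoPiI_ne_zero : negTwoPiI ≠ 0 := by
  simp [negTwoPiI, Real.pi_ne_zero, Complex.I_ne_zero]

lemma conj_negTwoPiI : conj negTwoPiI = -negTwoPiI := by
  rw [negTwoPiI, map_neg, map_mul, map_mul, Complex.conj_I, Complex.conj_ofReal, map_ofNat]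
  ring

lemma eChar_add (a b : ℝ) : eChar (a + b) = eChar a * eChar b := by
  rw [eChar, eChar, eChar, ← Complex.exp_add]; push_cast; ring_nf

lemma eChar_zero : eChar 0 = 1 := by simp [eChar]

lemma eChar_mul_eChar_neg (a : ℝ) : eChar a * eChar (-a) = 1 := by
  rw [← eChar_add, add_neg_cancel, eChar_zero]

lemma conj_eChar (r : ℝ) : conj (eChar r) = eChar (-r) := by
  rw [eChar, eChar, ← Complex.exp_conj, map_mul, conj_negTwoPiI, Complex.conj_ofReal]
  push_cast; ring_nf

lemma norm_eChar (r : ℝ) : ‖eChar r‖ = 1 := by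
  rw [eChar, show negTwoPiI * r = ((-(2 * π * r) : ℝ) : ℂ) * Complex.I by
    simp only [negTwoPiI]; push_cast; ring]
  exact Complex.norm_exp_ofReal_mul_I _

lemma eChar_mul_eq_exp (p t : ℝ) : eChar (p * t) = Complex.exp (negTwoPiI * p * t) := by
  rw [eChar]; push_cast; ring_nf

@[fun_prop]
lemma continuous_eChar : Continuous eChar := by
  unfold eChar; fun_prop

lemma fexp_eq_eChar {d : ℕ} (l x : Euc d) : fexp l x = eChar (inner ℝ l x) := by
  rw [fexp, eChar, negTwoPiI]; ring_nf

def fourier01 (h : ℝ → ℂ) (p : ℝ) : ℂ := ∫ t in (0 : ℝ)..1, h t * eChar (p * t)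

lemma fourier01_one_of_ne_zero {q : ℝ} (hq : q ≠ 0) :
    fourier01 1 q = (eChar q - 1) / (negTwoPiI * q) := by
  have hc : negTwoPiI * q ≠ 0 := mul_ne_zero negTwoPiI_ne_zero (by exact_mod_cast hq)
  simp only [fourier01, Pi.one_apply, one_mul, eChar_mul_eq_exp]
  rw [integral_exp_mul_complex hc, ← eChar_mul_eq_exp, ← eChar_mul_eq_exp]
  simp [eChar_zero]

lemma fourier01_one_zero : fourier01 1 0 = 1 := by
  simp [fourier01, eChar_zero]

lemma fourier01_ofReal_of_ne_zero {q : ℝ} (hq : q ≠ 0) :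
    fourier01 (↑) q = ((negTwoPiI * q - 1) * eChar q + 1) / (negTwoPiI * q) ^ 2 := by
  set c := negTwoPiI * q
  have hc : c ≠ 0 := mul_ne_zero negTwoPiI_ne_zero (by exact_mod_cast hq)
  have hderiv : ∀ t ∈ uIcc (0 : ℝ) 1,
      HasDerivAt (fun t : ℝ => (c * t - 1) / c ^ 2 * Complex.exp (c * t))
        (t * eChar (q * t)) t := by
    intro t _
    have hlin : HasDerivAt (fun t : ℝ => c * t) c t := by
      simpa using ((hasDerivAt_id t).ofReal_comp).const_mul c
    refine (((hlin.sub_const 1).div_const (c ^ 2)).mul hlin.cexp).congr_deriv ?_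
    rw [eChar_mul_eq_exp, ← show c = negTwoPiI * q from rfl]
    field_simp
    ring
  have hint : IntervalIntegrable (fun t : ℝ => (t : ℂ) * eChar (q * t)) volume 0 1 := by
    apply Continuous.intervalIntegrable; fun_prop
  rw [fourier01, intervalIntegral.integral_eq_sub_of_hasDerivAt hderiv hint,
    show eChar q = Complex.exp (c * (1 : ℝ)) by rw [← one_mul q, eChar_mul_eq_exp]; simp [c]]
  field_simp
  simp only [Complex.ofReal_one, Complex.ofReal_zero, mul_one, mul_zero, Complex.exp_zero]
  ring

lemma fourier01_ofReal_zero : fourier01 (↑) 0 = 1 / 2 := by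
  simp only [fourier01, zero_mul, eChar_zero, mul_one]
  rw [intervalIntegral.integral_ofReal, integral_id]
  norm_num

/-- The right-hand side is the Fourier transform of the triangle `1 - |s|` on `[-1, 1]`,
split at `s = 0`. -/
lemma sq_norm_fourier01_one (q : ℝ) :
    ((‖fourier01 1 q‖ ^ 2 : ℝ) : ℂ) =
      fourier01 (↑) q * eChar (-q) + eChar q * conj (fourier01 (↑) q) := by
  rw [Complex.ofReal_pow, ← Complex.mul_conj']
  rcases eq_or_ne q 0 with rfl | hq
  · rw [fourier01_one_zero, fourier01_ofReal_zero, neg_zero, eChar_zero]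
    rw [map_div₀, map_one, map_ofNat]; norm_num
  · have hconj : conj (negTwoPiI * q) = -(negTwoPiI * q) := by
      rw [map_mul, conj_negTwoPiI, Complex.conj_ofReal, neg_mul]
    rw [fourier01_one_of_ne_zero hq, fourier01_ofReal_of_ne_zero hq]
    simp only [map_div₀, map_add, map_sub, map_mul, map_pow, map_one, conj_eChar, hconj]
    have hinv := eChar_mul_eChar_neg q
    have hc₀ := negTwoPiI_ne_zero
    have hq₀ : (q : ℂ) ≠ 0 := by exact_mod_cast hq
    field_simp
    linear_combination hinv

lemma intervalIntegral_mul_eChar_one_sub (h : ℝ → ℂ) (q : ℝ) :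
    ∫ t in (0 : ℝ)..1, h t * eChar (q * (1 - t)) = fourier01 (fun t => h (1 - t)) q := by
  simpa [fourier01] using intervalIntegral.integral_comp_sub_left
    (fun s => h (1 - s) * eChar (q * s)) (1 : ℝ) (a := 0) (b := 1)

lemma fourier01_ofReal_comp_one_sub (k : ℝ → ℝ) (p : ℝ) :
    fourier01 (fun t => (k (1 - t) : ℂ)) p =
      eChar p * conj (fourier01 (fun t => (k t : ℂ)) p) := by
  rw [← intervalIntegral_mul_eChar_one_sub (fun t => (k t : ℂ)), fourier01,
    ← intervalIntegral.intervalIntegral_conj, ← intervalIntegral.integral_const_mul]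
  congr 1 with t
  rw [map_mul, Complex.conj_ofReal, conj_eChar, mul_one_sub, sub_eq_add_neg, eChar_add]
  ring

lemma fourier01_indicator_Ioc {δ : ℝ} (hδ : δ ∈ Icc (0 : ℝ) 1) (p : ℝ) :
    fourier01 (fun t => ((Ioc 0 δ).indicator 1 t : ℝ)) p =
      ∫ t in (0 : ℝ)..δ, eChar (p * t) := by
  have hind : (fun t => (((Ioc 0 δ).indicator 1 t : ℝ) : ℂ) * eChar (p * t)) =
      (Ioc 0 δ).indicator (fun t => eChar (p * t)) := by
    ext t; by_cases ht : t ∈ Ioc 0 δ <;> simp [ht]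
  rw [fourier01, hind, intervalIntegral.integral_of_le zero_le_one,
    intervalIntegral.integral_of_le hδ.1, setIntegral_indicator measurableSet_Ioc,
    inter_eq_right.mpr (Ioc_subset_Ioc_right hδ.2)]

lemma tendsto_inv_smul_intervalIntegral {E : Type*} [NormedAddCommGroup E] [NormedSpace ℝ E]
    [CompleteSpace E] {f : ℝ → E} (hf : Continuous f) :
    Tendsto (fun δ : ℝ => δ⁻¹ • ∫ t in (0 : ℝ)..δ, f t) (𝓝[≠] 0) (𝓝 (f 0)) :=
  (hasDerivAt_iff_tendsto_slope.mp (hf.integral_hasStrictDerivAt 0 0).hasDerivAt).congr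
    fun δ => by simp [slope_def_module]

lemma tsum_mul_eq_zero_of_hasSum_intervalIntegral_mul {ι : Type*} {g : ι → ℝ → ℂ} {w : ι → ℝ}
    (hg : ∀ i, Continuous (g i)) (hg1 : ∀ i t, ‖g i t‖ ≤ 1) (hw : Summable w)
    (h : ∀ δ ∈ Ioc (0 : ℝ) 1, HasSum (fun i => (∫ t in (0 : ℝ)..δ, g i t) * w i) 0) :
    ∑' i, g i 0 * w i = 0 := by
  have hlim := tendsto_tsum_of_dominated_convergence (𝓕 := 𝓝[>] (0 : ℝ))
    (f := fun δ i => (δ⁻¹ • ∫ t in (0 : ℝ)..δ, g i t) * w i) hw.abs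
    (fun i => ((tendsto_inv_smul_intervalIntegral (hg i)).mono_left
      (nhdsGT_le_nhdsNE 0)).mul_const _)
    (eventually_nhdsWithin_of_forall fun δ (hδ : 0 < δ) i => by
      rw [norm_mul, Complex.norm_real, Real.norm_eq_abs, norm_smul, Real.norm_eq_abs,
        abs_inv, abs_of_pos hδ]
      refine mul_le_of_le_one_left (abs_nonneg _) (inv_mul_le_one_of_le₀ ?_ hδ.le)
      simpa [abs_of_pos hδ] using
        intervalIntegral.norm_integral_le_of_norm_le_const (a := 0) (b := δ) fun t _ => hg1 i t)
  have hzero : ∀ᶠ δ : ℝ in 𝓝[>] 0, ∑' i, (δ⁻¹ • ∫ t in (0 : ℝ)..δ, g i t) * w i = 0 := by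
    filter_upwards [Ioc_mem_nhdsGT zero_lt_one] with δ hδ
    simpa [mul_assoc] using ((h δ hδ).const_smul δ⁻¹).tsum_eq
  exact tendsto_nhds_unique (hlim.congr' hzero) tendsto_const_nhds

def piPath : Fin 3 → ℝ → Euc 2
  | 0, t => ptE 0 0 + t • ptE 0 1
  | 1, t => ptE 0 1 + t • ptE 1 0
  | 2, t => ptE 1 1 + t • ptE 0 (-1)

def piParam : Fin 3 → Euc 2 → ℝ
  | 0, x => x 1
  | 1, x => x 0
  | 2, x => 1 - x 1

def piSide (i : Fin 3) : Set (Euc 2) := piPath i '' Ioo 0 1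

def piMeasure : Measure (Euc 2) :=
  (3 : ℝ≥0∞)⁻¹ • (segMeasure (ptE 0 0) (ptE 0 1) + segMeasure (ptE 0 1) (ptE 1 0) +
    segMeasure (ptE 1 1) (ptE 0 (-1)))

@[simp] lemma ptE_apply_zero (a b : ℝ) : ptE a b 0 = a := rfl

@[simp] lemma ptE_apply_one (a b : ℝ) : ptE a b 1 = b := rfl

@[simp] lemma piPath_apply_zero (i : Fin 3) (t : ℝ) :
    piPath i t 0 = ![0, t, 1] i := by
  fin_cases i <;> simp [piPath]

@[simp] lemma piPath_apply_one (i : Fin 3) (t : ℝ) :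
    piPath i t 1 = ![t, 1, 1 - t] i := by
  fin_cases i <;> simp [piPath, sub_eq_add_neg]

lemma piParam_piPath (i : Fin 3) (t : ℝ) : piParam i (piPath i t) = t := by
  fin_cases i <;> simp [piParam]

@[fun_prop]
lemma continuous_piPath (i : Fin 3) : Continuous (piPath i) := by
  fin_cases i <;> exact continuous_const.add (continuous_id.smul continuous_const)

@[fun_prop]
lemma measurable_piParam (i : Fin 3) : Measurable (piParam i) := by
  have hcoord (k : Fin 2) : Measurable fun x : Euc 2 => x k := by fun_prop
  fin_cases i
  exacts [hcoord 1, hcoord 0, measurable_const.sub (hcoord 1)]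

lemma measurableSet_piSide (i : Fin 3) : MeasurableSet (piSide i) :=
  measurableSet_Ioo.image_of_continuousOn_injOn (continuous_piPath i).continuousOn
    (Function.LeftInverse.injective (piParam_piPath i)).injOn

lemma piPath_notMem_piSide {i j : Fin 3} (hij : j ≠ i) {t : ℝ} (ht : t ∈ Ioo 0 1) :
    piPath j t ∉ piSide i := by
  rintro ⟨s, hs, hst⟩
  have h0 := congrArg (· 0) hst
  have h1 := congrArg (· 1) hst
  simp only [piPath_apply_zero, piPath_apply_one] at h0 h1
  obtain ⟨hs0, hs1⟩ := hs
  obtain ⟨ht0, ht1⟩ := ht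
  fin_cases i <;> fin_cases j <;> simp at hij h0 h1 <;> linarith

instance (x0 v : Euc 2) : IsFiniteMeasure (segMeasure x0 v) := by
  unfold segMeasure; infer_instance

instance : IsFiniteMeasure piMeasure :=
  ⟨by rw [piMeasure, Measure.smul_apply]; exact ENNReal.mul_lt_top (by simp) (measure_lt_top _ _)⟩

lemma integral_piMeasure {E : Type*} [NormedAddCommGroup E] [NormedSpace ℝ E]
    {F : Euc 2 → E} (hF : Integrable F piMeasure) :
    ∫ x, F x ∂piMeasure = (3 : ℝ)⁻¹ • ∑ i, ∫ t in Ioo 0 1, F (piPath i t) := by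
  rw [piMeasure, integrable_smul_measure (by simp) (by simp), integrable_add_measure,
    integrable_add_measure] at hF
  obtain ⟨⟨h0, h1⟩, h2⟩ := hF
  have hseg {x0 v : Euc 2} (hi : Integrable F (segMeasure x0 v)) :
      ∫ x, F x ∂segMeasure x0 v = ∫ t in Ioo (0 : ℝ) 1, F (x0 + t • v) := by
    rw [segMeasure, integral_map (by fun_prop) hi.aestronglyMeasurable,
      integral_Icc_eq_integral_Ioo]
  rw [piMeasure, integral_smul_measure, integral_add_measure (h0.add_measure h1) h2,
    integral_add_measure h0 h1, Fin.sum_univ_three, hseg h0, hseg h1, hseg h2]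
  simp only [ENNReal.toReal_inv, ENNReal.toReal_ofNat]
  rfl

lemma integral_piMeasure_of_eq_zero_off {E : Type*} [NormedAddCommGroup E] [NormedSpace ℝ E]
    (i : Fin 3) {F : Euc 2 → E} (hF : Integrable F piMeasure) (hFi : ∀ x ∉ piSide i, F x = 0) :
    ∫ x, F x ∂piMeasure = (3 : ℝ)⁻¹ • ∫ t in Ioo 0 1, F (piPath i t) := by
  rw [integral_piMeasure hF, Finset.sum_eq_single i (fun j _ hji => ?_) (by simp)]
  exact setIntegral_eq_zero_of_forall_eq_zero fun t ht => hFi _ (piPath_notMem_piSide hji ht)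

/-- `h` transported to the open `i`-th side. The corners are left out, so that lifts to
different sides have disjoint supports. -/
def sideLift (i : Fin 3) (h : ℝ → ℂ) : Euc 2 → ℂ :=
  (piSide i).indicator fun x => h (piParam i x)

section sideLift

variable {i : Fin 3} {h : ℝ → ℂ}

lemma sideLift_piPath {t : ℝ} (ht : t ∈ Ioo 0 1) : sideLift i h (piPath i t) = h t := by
  rw [sideLift, indicator_of_mem (show piPath i t ∈ piSide i from mem_image_of_mem _ ht),
    piParam_piPath]

lemma sideLift_eq_zero_of_notMem {x : Euc 2} (hx : x ∉ piSide i) : sideLift i h x = 0 :=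
  indicator_of_notMem hx _

lemma sideLift_eq_zero_or {j : Fin 3} (hij : i ≠ j) (k : ℝ → ℂ) (x : Euc 2) :
    sideLift i h x = 0 ∨ sideLift j k x = 0 := by
  by_cases hx : x ∈ piSide i
  · obtain ⟨t, ht, rfl⟩ := hx
    exact .inr (sideLift_eq_zero_of_notMem (piPath_notMem_piSide hij ht))
  · exact .inl (sideLift_eq_zero_of_notMem hx)

lemma measurable_sideLift (hh : Measurable h) : Measurable (sideLift i h) :=
  (hh.comp (measurable_piParam i)).indicator (measurableSet_piSide i)

lemma norm_sideLift_le {C : ℝ} (hC : ∀ t ∈ Ioo (0 : ℝ) 1, ‖h t‖ ≤ C) (x : Euc 2) :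
    ‖sideLift i h x‖ ≤ C := by
  by_cases hx : x ∈ piSide i
  · obtain ⟨t, ht, rfl⟩ := hx
    rw [sideLift_piPath ht]
    exact hC t ht
  · rw [sideLift_eq_zero_of_notMem hx, norm_zero]
    exact (norm_nonneg _).trans (hC 2⁻¹ ⟨by norm_num, by norm_num⟩)

lemma memLp_sideLift (hh : Measurable h) {C : ℝ} (hC : ∀ t ∈ Ioo (0 : ℝ) 1, ‖h t‖ ≤ C)
    (p : ℝ≥0∞) : MemLp (sideLift i h) p piMeasure :=
  .of_bound (measurable_sideLift hh).aestronglyMeasurable C (.of_forall (norm_sideLift_le hC))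

lemma integral_sideLift_mul (hh : Measurable h) {C : ℝ} (hC : ∀ t ∈ Ioo (0 : ℝ) 1, ‖h t‖ ≤ C)
    {φ : Euc 2 → ℂ} (hφ : Measurable φ) (hφ1 : ∀ x, ‖φ x‖ ≤ 1) :
    ∫ x, sideLift i h x * φ x ∂piMeasure = 3⁻¹ * ∫ t in (0 : ℝ)..1, h t * φ (piPath i t) := by
  have hint : Integrable (fun x => sideLift i h x * φ x) piMeasure :=
    ((memLp_sideLift hh hC 1).integrable le_rfl).mul_bdd hφ.aestronglyMeasurable
      (.of_forall hφ1)
  rw [integral_piMeasure_of_eq_zero_off i hint fun x hx => by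
      rw [sideLift_eq_zero_of_notMem hx, zero_mul],
    intervalIntegral.integral_of_le zero_le_one, integral_Ioc_eq_integral_Ioo,
    setIntegral_congr_fun measurableSet_Ioo fun t ht => by rw [sideLift_piPath ht],
    Complex.real_smul, Complex.ofReal_inv, Complex.ofReal_ofNat]

lemma integral_norm_sq_sideLift (hh : Measurable h) {C : ℝ}
    (hC : ∀ t ∈ Ioo (0 : ℝ) 1, ‖h t‖ ≤ C) :
    ∫ x, ‖sideLift i h x‖ ^ 2 ∂piMeasure = 3⁻¹ * ∫ t in Ioo (0 : ℝ) 1, ‖h t‖ ^ 2 := by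
  rw [integral_piMeasure_of_eq_zero_off i ((memLp_sideLift hh hC (2 : ℕ)).integrable_norm_pow')
      fun x hx => by rw [sideLift_eq_zero_of_notMem hx, norm_zero, zero_pow two_ne_zero],
    setIntegral_congr_fun measurableSet_Ioo fun t ht => by rw [sideLift_piPath ht], smul_eq_mul]

end sideLift

def frameCoeff {d : ℕ} (μ : Measure (Euc d)) (f : Euc d → ℂ) (l : Euc d) : ℂ :=
  ∫ x, f x * fexp l x ∂μ

lemma norm_fexp {d : ℕ} (l x : Euc d) : ‖fexp l x‖ = 1 := by
  rw [fexp_eq_eChar, norm_eChar]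

@[fun_prop]
lemma continuous_fexp {d : ℕ} (l : Euc d) : Continuous (fexp l) := by
  unfold fexp; fun_prop

namespace IsTightFrameSpectrum

variable {d : ℕ} {μ : Measure (Euc d)} {Λ : Set (Euc d)} {A : ℝ} {f g : Euc d → ℂ}

lemma hasSum_norm_sq (hΛ : IsTightFrameSpectrum μ Λ A) (hf : MemLp f 2 μ) :
    HasSum (fun l : Λ => ‖frameCoeff μ f l‖ ^ 2) (A * ∫ x, ‖f x‖ ^ 2 ∂μ) := by
  have hid : ∑' l : Λ, ‖frameCoeff μ f l‖ ^ 2 = A * ∫ x, ‖f x‖ ^ 2 ∂μ := hΛ.2.2 f hf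
  refine hid ▸ Summable.hasSum ?_
  by_contra hns
  rw [tsum_eq_zero_of_not_summable hns, eq_comm, mul_eq_zero, or_iff_right hΛ.2.1.ne'] at hid
  have hf0 : f =ᵐ[μ] 0 := by
    filter_upwards [(integral_eq_zero_iff_of_nonneg (fun x => by positivity)
      ((memLp_two_iff_integrable_sq_norm hf.1).mp hf)).mp hid] with x hx
    simpa using hx
  refine hns (summable_zero.congr fun l => ?_)
  rw [frameCoeff, integral_eq_zero_of_ae (hf0.mono fun x hx => by simp [hx]), norm_zero,
    zero_pow two_ne_zero]

lemma frameCoeff_add_mul [IsFiniteMeasure μ] (hf : MemLp f 2 μ) (hg : MemLp g 2 μ) (c : ℂ)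
    (l : Euc d) :
    frameCoeff μ (fun x => g x + c * f x) l = frameCoeff μ g l + c * frameCoeff μ f l := by
  have hint {φ : Euc d → ℂ} (hφ : MemLp φ 2 μ) : Integrable (fun x => φ x * fexp l x) μ :=
    (hφ.integrable one_le_two).mul_bdd (continuous_fexp l).aestronglyMeasurable
      (.of_forall fun x => (norm_fexp l x).le)
  simp only [frameCoeff, add_mul, mul_assoc]
  rw [integral_add (hint hg) ((hint hf).const_mul c), integral_const_mul]

lemma hasSum_mul_conj_eq_zero [IsFiniteMeasure μ] (hΛ : IsTightFrameSpectrum μ Λ A)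
    (hf : MemLp f 2 μ) (hg : MemLp g 2 μ) (hfg : ∀ x, f x = 0 ∨ g x = 0) :
    HasSum (fun l : Λ => frameCoeff μ f l * conj (frameCoeff μ g l)) 0 := by
  -- For `‖c‖ = 1` the frame identity for `g + c f` has a right-hand side independent of `c`.
  have hdiag (c : ℂ) (hc : ‖c‖ = 1) : HasSum (fun l : Λ =>
      ((‖frameCoeff μ g l + c * frameCoeff μ f l‖ ^ 2 : ℝ) : ℂ))
      (A * ∫ x, (‖g x‖ ^ 2 + ‖f x‖ ^ 2) ∂μ : ℝ) := by
    have hpt (x : Euc d) : ‖g x + c * f x‖ ^ 2 = ‖g x‖ ^ 2 + ‖f x‖ ^ 2 := by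
      rcases hfg x with h | h <;> simp [h, hc]
    have h := hΛ.hasSum_norm_sq (f := fun x => g x + c * f x) (hg.add (hf.const_mul c))
    simp only [hpt, frameCoeff_add_mul hf hg] at h
    exact Complex.hasSum_ofReal.mpr h
  have hpolar := (((hdiag 1 (by simp)).sub (hdiag (-1) (by simp))).add
    (((hdiag (-Complex.I) (by simp)).sub (hdiag Complex.I (by simp))).mul_right
      Complex.I)).div_const 4
  simp only [sub_self, zero_mul, add_zero, zero_div] at hpolar
  refine hpolar.congr_fun fun l => ?_
  rw [← RCLike.inner_apply, inner_eq_sum_norm_sq_div_four]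
  simp [sub_eq_add_neg]

end IsTightFrameSpectrum

lemma fexp_piPath_zero (l : Euc 2) (t : ℝ) : fexp l (piPath 0 t) = eChar (l 1 * t) := by
  simp [fexp_eq_eChar, PiLp.inner_apply, Fin.sum_univ_two, mul_comm]

lemma fexp_piPath_one (l : Euc 2) (t : ℝ) :
    fexp l (piPath 1 t) = eChar (l 0 * t) * eChar (l 1) := by
  simp [fexp_eq_eChar, PiLp.inner_apply, Fin.sum_univ_two, mul_comm, ← eChar_add]

lemma fexp_piPath_two (l : Euc 2) (t : ℝ) :
    fexp l (piPath 2 t) = eChar (l 0) * eChar (l 1 * (1 - t)) := by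
  simp [fexp_eq_eChar, PiLp.inner_apply, Fin.sum_univ_two, mul_comm, ← eChar_add]

section frameCoeff_sideLift

variable {h : ℝ → ℂ} (hh : Measurable h) {C : ℝ} (hC : ∀ t ∈ Ioo (0 : ℝ) 1, ‖h t‖ ≤ C)
  (l : Euc 2)
include hh hC

lemma frameCoeff_sideLift_zero :
    frameCoeff piMeasure (sideLift 0 h) l = 3⁻¹ * fourier01 h (l 1) := by
  simp only [frameCoeff, integral_sideLift_mul hh hC (continuous_fexp l).measurable
    (fun x => (norm_fexp l x).le), fexp_piPath_zero, fourier01]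

lemma frameCoeff_sideLift_one :
    frameCoeff piMeasure (sideLift 1 h) l = 3⁻¹ * (fourier01 h (l 0) * eChar (l 1)) := by
  simp only [frameCoeff, integral_sideLift_mul hh hC (continuous_fexp l).measurable
    (fun x => (norm_fexp l x).le), fexp_piPath_one, fourier01, ← mul_assoc,
    intervalIntegral.integral_mul_const]

lemma frameCoeff_sideLift_two :
    frameCoeff piMeasure (sideLift 2 h) l =
      3⁻¹ * (eChar (l 0) * fourier01 (fun t => h (1 - t)) (l 1)) := by
  simp only [frameCoeff, integral_sideLift_mul hh hC (continuous_fexp l).measurable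
    (fun x => (norm_fexp l x).le), fexp_piPath_two, mul_left_comm (h _),
    intervalIntegral.integral_const_mul, intervalIntegral_mul_eChar_one_sub]

end frameCoeff_sideLift

namespace IsTightFrameSpectrum

variable {Λ : Set (Euc 2)} {A : ℝ}

lemma hasSum_sq_norm_fourier01_one (hΛ : IsTightFrameSpectrum piMeasure Λ A) :
    HasSum (fun l : Λ => ‖fourier01 1 ((l : Euc 2) 1)‖ ^ 2) (3 * A) := by
  have hone : ∀ t ∈ Ioo (0 : ℝ) 1, ‖(1 : ℝ → ℂ) t‖ ≤ 1 := by simp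
  have h := hΛ.hasSum_norm_sq (memLp_sideLift (i := 0) measurable_one hone 2)
  have hI : ∫ t in Ioo (0 : ℝ) 1, ‖(1 : ℝ → ℂ) t‖ ^ 2 = 1 := by simp
  rw [integral_norm_sq_sideLift measurable_one hone, hI] at h
  have h9 := h.mul_left 9
  rw [show 9 * (A * (3⁻¹ * 1)) = 3 * A by ring] at h9
  refine h9.congr_fun fun l => ?_
  rw [frameCoeff_sideLift_zero measurable_one hone, norm_mul, mul_pow, norm_inv]
  norm_num
  ring

lemma hasSum_fourier01_mul_sq_norm_eq_zero (hΛ : IsTightFrameSpectrum piMeasure Λ A)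
    {k : ℝ → ℝ} (hk : Measurable k) {C : ℝ} (hC : ∀ t, |k t| ≤ C) :
    HasSum (fun l : Λ => fourier01 (fun t => k t) ((l : Euc 2) 0) *
      ((‖fourier01 1 ((l : Euc 2) 1)‖ ^ 2 : ℝ) : ℂ)) 0 := by
  have hramp : ∀ t ∈ Ioo (0 : ℝ) 1, ‖(t : ℂ)‖ ≤ 1 := fun t ht => by
    rw [Complex.norm_real, Real.norm_of_nonneg ht.1.le]; exact ht.2.le
  have hramp' : ∀ t ∈ Ioo (0 : ℝ) 1, ‖((1 - t : ℝ) : ℂ)‖ ≤ 1 := fun t ht =>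
    hramp (1 - t) ⟨by linarith [ht.2], by linarith [ht.1]⟩
  have hk₀ : Measurable fun t => (k t : ℂ) := by fun_prop
  have hk₁ : Measurable fun t => (k (1 - t) : ℂ) := by fun_prop
  have hkC : ∀ t ∈ Ioo (0 : ℝ) 1, ‖(k t : ℂ)‖ ≤ C := fun t _ => by simpa using hC t
  have hkC' : ∀ t ∈ Ioo (0 : ℝ) 1, ‖(k (1 - t) : ℂ)‖ ≤ C := fun t _ => by simpa using hC _
  have hleft := hΛ.hasSum_mul_conj_eq_zero (memLp_sideLift hk₀ hkC 2)
    (memLp_sideLift (i := 0) (by fun_prop) hramp 2)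
    (sideLift_eq_zero_or (i := 1) (j := 0) (by decide) _)
  have hright := hΛ.hasSum_mul_conj_eq_zero (memLp_sideLift (i := 2) (by fun_prop) hramp' 2)
    (memLp_sideLift hk₁ hkC' 2)
    (sideLift_eq_zero_or (i := 2) (j := 1) (by decide) _)
  have h := (hleft.add hright).mul_left 9
  rw [add_zero, mul_zero] at h
  refine h.congr_fun fun l => ?_
  rw [frameCoeff_sideLift_one hk₀ hkC, frameCoeff_sideLift_zero (by fun_prop) hramp,
    frameCoeff_sideLift_two (by fun_prop) hramp', frameCoeff_sideLift_one hk₁ hkC']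
  simp only [_root_.sub_sub_cancel]
  rw [fourier01_ofReal_comp_one_sub k, sq_norm_fourier01_one]
  simp only [map_mul, map_inv₀, map_ofNat, conj_eChar, Complex.conj_conj]
  linear_combination -(fourier01 (fun t => k t) ((l : Euc 2) 0) *
    fourier01 (↑) ((l : Euc 2) 1) * eChar (-(l : Euc 2) 1)) * eChar_mul_eChar_neg ((l : Euc 2) 0)

end IsTightFrameSpectrum

/-- The normalized arc-length measure on the Π-shape, the polygonal line joining
`(0,0)` to `(0,1)` to `(1,1)` to `(1,0)`, is not tight-frame spectral. -/
theorem pi_shape_not_tight_frame_spectral :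
    ¬ TightFrameSpectral
      ((3 : ℝ≥0∞)⁻¹ •
        (segMeasure (ptE 0 0) (ptE 0 1) + segMeasure (ptE 0 1) (ptE 1 0) +
          segMeasure (ptE 1 1) (ptE 0 (-1)))) := by
  rintro ⟨Λ, A, hΛ⟩
  change IsTightFrameSpectrum piMeasure Λ A at hΛ
  have hG := hΛ.hasSum_sq_norm_fourier01_one
  have hvanish (δ : ℝ) (hδ : δ ∈ Ioc 0 1) : HasSum (fun l : Λ =>
      (∫ t in (0 : ℝ)..δ, eChar ((l : Euc 2) 0 * t)) *
        ((‖fourier01 1 ((l : Euc 2) 1)‖ ^ 2 : ℝ) : ℂ)) 0 := by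
    have hind : ∀ t, |(Ioc 0 δ).indicator (1 : ℝ → ℝ) t| ≤ 1 := fun t => by
      by_cases ht : t ∈ Ioc 0 δ <;> simp [ht]
    have h := hΛ.hasSum_fourier01_mul_sq_norm_eq_zero
      (measurable_one.indicator measurableSet_Ioc) hind
    simp only [fourier01_indicator_Ioc (Ioc_subset_Icc_self hδ)] at h
    exact h
  have hzero := tsum_mul_eq_zero_of_hasSum_intervalIntegral_mul
    (g := fun (l : Λ) t => eChar ((l : Euc 2) 0 * t)) (fun l => by fun_prop)
    (fun l t => (norm_eChar _).le) hG.summable hvanish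
  simp only [mul_zero, eChar_zero, one_mul, ← Complex.ofReal_tsum, Complex.ofReal_eq_zero] at hzero
  linarith [hG.tsum_eq, hΛ.2.1]
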